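/- (Single-step simulation.) Let M be a PTIME TM with tape alphabet Γ and input alphabet Σ, together with an encoding as in the simulation setup. Then there exists a term SIMULATE of ForNo such that for every state σ and configuration c with σ ≈ c: (a) if c is a halting configuration (its state is q_HALT), then ⟨SIMULATE, σ⟩ ⇓ τ for some τ with τ ≈ c; and (b) if c ⇝ c' for some configuration c', then ⟨SIMULATE, σ⟩ ⇓ τ for some τ with τ ≈ c'. -/

import Mathlib

set_option linter.unusedVariables false

namespace ForNo

/-- Registers. -/
abbrev Reg := ℕ
/-- Stacks of natural numbers; the head is the top. -/
abbrev Stack := List ℕ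
/-- Stores map registers to stacks. -/
abbrev Store := Reg → Stack
/-- A state is a store together with an error counter. -/
abbrev FState := Store × ℕ

/-- The store mapping every register to the empty stack. -/
def emptyStore : Store := fun _ => []

/-- Store update. -/
def upd (φ : Store) (x : Reg) (s : Stack) : Store := fun y => if y = x then s else φ y

/-- Counter-guarded push operation. -/
def pushOp (n : ℕ) : Stack × ℕ → Stack × ℕ
  | (s, 0) => (n :: s, 0)
  | (s, c + 1) => if s.head? = some n then (s, c + 1) else (s, c)

/-- Counter-guarded pop operation. -/
def popOp (n : ℕ) : Stack × ℕ → Stack × ℕ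
  | (s, c) =>
      if s.head? = some n then
        match c with
        | 0 => (s.tail, 0)
        | c + 1 => (s, c + 1)
      else (s, c + 1)

mutual
  /-- Terms of the (raw) language. -/
  inductive Term : Type where
    | skip : Term
    | push : ℕ → Reg → Term
    | pop : ℕ → Reg → Term
    | seq : Term → Term → Term
    | ifeq : Reg → ℕ → Term → Term
    | normal : List Reg → Term → Term
    | fort : Reg → Bodies → Term
    | roft : Reg → Bodies → Term
  /-- Nonempty lists of iteration bodies. -/
  inductive Bodies : Type where
    | single : Term → Bodies
    | cons : Term → Bodies → Bodies
end

/-- `ps.get i` is `P_min(i,m)` where `ps = P₀ … P_m`. -/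
def Bodies.get : Bodies → ℕ → Term
  | .single t, _ => t
  | .cons t _, 0 => t
  | .cons _ ps, i + 1 => ps.get i

mutual
  /-- Big-step operational semantics `⟨T, ω⟩ ⇓ ω'`. -/
  inductive Eval : Term → FState → FState → Prop where
    | skip : ∀ ω, Eval .skip ω ω
    | seq : ∀ {t u : Term} {ω ω' ω'' : FState},
        Eval t ω ω' → Eval u ω' ω'' → Eval (.seq t u) ω ω''
    | push : ∀ (n : ℕ) (x : Reg) (φ : Store) (c : ℕ),
        Eval (.push n x) (φ, c) (upd φ x (pushOp n (φ x, c)).1, (pushOp n (φ x, c)).2)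
    | pop : ∀ (n : ℕ) (x : Reg) (φ : Store) (c : ℕ),
        Eval (.pop n x) (φ, c) (upd φ x (popOp n (φ x, c)).1, (popOp n (φ x, c)).2)
    | ifeq_true : ∀ {x n t} {φ : Store} {c : ℕ} {ω' : FState},
        (φ x).head? = some n → Eval t (φ, c) ω' → Eval (.ifeq x n t) (φ, c) ω'
    | ifeq_false : ∀ {x n t} (φ : Store) (c : ℕ),
        (φ x).head? ≠ some n → Eval (.ifeq x n t) (φ, c) (φ, c)
    | normal : ∀ {xs t ω ω'}, Eval t ω ω' → Eval (.normal xs t) ω ω'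
    | fort : ∀ {x ps ω ω'}, EvalList (ω.1 x) ps ω ω' → Eval (.fort x ps) ω ω'
    | roft : ∀ {x ps ω ω'}, EvalList (ω.1 x).reverse ps ω ω' → Eval (.roft x ps) ω ω'
  /-- Iteration judgment `⟦s, ps, ω⟧ ⇓ ω'`. -/
  inductive EvalList : Stack → Bodies → FState → FState → Prop where
    | nil : ∀ (ps : Bodies) (ω : FState), EvalList [] ps ω ω
    | cons : ∀ {i : ℕ} {t : Stack} {ps : Bodies} {ω ω'' ω' : FState},
        Eval (ps.get i) ω ω'' → EvalList t ps ω'' ω' → EvalList (i :: t) ps ω ω'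
end

mutual
  /-- The inversion map `−(·)` on terms. -/
  def Term.inv : Term → Term
    | .skip => .skip
    | .push n x => .pop n x
    | .pop n x => .push n x
    | .seq t u => .seq u.inv t.inv
    | .ifeq x n t => .ifeq x n t.inv
    | .normal xs t => .normal xs t.inv
    | .fort x ps => .roft x ps.inv
    | .roft x ps => .fort x ps.inv
  def Bodies.inv : Bodies → Bodies
    | .single t => .single t.inv
    | .cons t ps => .cons t.inv ps.inv
end

mutual
  /-- `t.Writes y` holds iff some `PUSH`/`POP` occurring in `t` writes register `y`. -/
  def Term.Writes : Term → Reg → Prop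
    | .skip, _ => False
    | .push _ x, y => x = y
    | .pop _ x, y => x = y
    | .seq t u, y => t.Writes y ∨ u.Writes y
    | .ifeq _ _ t, y => t.Writes y
    | .normal _ t, y => t.Writes y
    | .fort _ ps, y => ps.Writes y
    | .roft _ ps, y => ps.Writes y
  def Bodies.Writes : Bodies → Reg → Prop
    | .single t, y => t.Writes y
    | .cons t ps, y => t.Writes y ∨ ps.Writes y
end

mutual
  /-- `t.Leads y` holds iff `y` leads some `FOR`/`ROF` iteration occurring in `t`. -/
  def Term.Leads : Term → Reg → Prop
    | .skip, _ => False
    | .push _ _, _ => False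
    | .pop _ _, _ => False
    | .seq t u, y => t.Leads y ∨ u.Leads y
    | .ifeq _ _ t, y => t.Leads y
    | .normal _ t, y => t.Leads y
    | .fort x ps, y => x = y ∨ ps.Leads y
    | .roft x ps, y => x = y ∨ ps.Leads y
  def Bodies.Leads : Bodies → Reg → Prop
    | .single t, y => t.Leads y
    | .cons t ps, y => t.Leads y ∨ ps.Leads y
end

mutual
  /-- `t.Mentions y` holds iff register `y` occurs in `t`. -/
  def Term.Mentions : Term → Reg → Prop
    | .skip, _ => False
    | .push _ x, y => x = y
    | .pop _ x, y => x = y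
    | .seq t u, y => t.Mentions y ∨ u.Mentions y
    | .ifeq x _ t, y => x = y ∨ t.Mentions y
    | .normal xs t, y => y ∈ xs ∨ t.Mentions y
    | .fort x ps, y => x = y ∨ ps.Mentions y
    | .roft x ps, y => x = y ∨ ps.Mentions y
  def Bodies.Mentions : Bodies → Reg → Prop
    | .single t, y => t.Mentions y
    | .cons t ps, y => t.Mentions y ∨ ps.Mentions y
end

mutual
  /-- The finite set of registers occurring in a term. -/
  def Term.regs : Term → Finset Reg
    | .skip => ∅
    | .push _ x => {x}
    | .pop _ x => {x}
    | .seq t u => t.regs ∪ u.regs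
    | .ifeq x _ t => insert x t.regs
    | .normal xs t => xs.toFinset ∪ t.regs
    | .fort x ps => insert x ps.regs
    | .roft x ps => insert x ps.regs
  def Bodies.regs : Bodies → Finset Reg
    | .single t => t.regs
    | .cons t ps => t.regs ∪ ps.regs
end

mutual
  /-- Safe terms: generated by the grammar `S` (no `NORMAL`). -/
  def Term.Safe : Term → Prop
    | .skip => True
    | .push _ _ => True
    | .pop _ _ => True
    | .seq t u => t.Safe ∧ u.Safe
    | .ifeq _ _ t => t.Safe
    | .normal _ _ => False
    | .fort _ ps => ps.Safe
    | .roft _ ps => ps.Safe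
  def Bodies.Safe : Bodies → Prop
    | .single t => t.Safe
    | .cons t ps => t.Safe ∧ ps.Safe
end

/-- Raw terms: generated by the grammar `T` (iterations only inside `NORMAL` bodies,
which must be safe). -/
def Term.Raw : Term → Prop
  | .skip => True
  | .push _ _ => True
  | .pop _ _ => True
  | .seq t u => t.Raw ∧ u.Raw
  | .ifeq _ _ t => t.Raw
  | .normal _ t => t.Safe
  | .fort _ _ => False
  | .roft _ _ => False

mutual
  /-- The read-only constraints (i) and (ii) defining membership in ForNo. -/
  def Term.WF : Term → Prop
    | .skip => True
    | .push _ _ => True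
    | .pop _ _ => True
    | .seq t u => t.WF ∧ u.WF
    | .ifeq x _ t => t.WF ∧ ¬ t.Writes x
    | .normal xs t => t.WF ∧ (∀ x ∈ xs, ¬ t.Writes x) ∧ (∀ y, t.Leads y → y ∈ xs)
    | .fort x ps => ps.WF ∧ ¬ ps.Writes x
    | .roft x ps => ps.WF ∧ ¬ ps.Writes x
  def Bodies.WF : Bodies → Prop
    | .single t => t.WF
    | .cons t ps => t.WF ∧ ps.WF
end

/-- A raw term is in ForNo if it satisfies the read-only constraints. -/
def InForNo (t : Term) : Prop := t.Raw ∧ t.WF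

/-- `iterSeq t k` is the `k`-fold sequential composition `t;…;t` (`SKIP` for `k = 0`). -/
def iterSeq (t : Term) : ℕ → Term
  | 0 => .skip
  | 1 => t
  | n + 2 => .seq t (iterSeq t (n + 1))

/-- `mkBodiesAux g i k` is the list of bodies `g i, g (i+1), …, g (i+k)`. -/
def mkBodiesAux (g : ℕ → Term) : ℕ → ℕ → Bodies
  | i, 0 => .single (g i)
  | i, k + 1 => .cons (g i) (mkBodiesAux g (i + 1) k)

/-- `mkBodies g k` is the list of bodies `g 0, g 1, …, g k`. -/
def mkBodies (g : ℕ → Term) (k : ℕ) : Bodies := mkBodiesAux g 0 k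

/-- `COPY(x,y)` with bodies `PUSH[0] y, …, PUSH[k] y`. -/
def COPY (x y : Reg) (k : ℕ) : Term :=
  .normal [x] (.roft x (mkBodies (fun i => .push i y) k))

/-- `n` nested `FOR rgt` iterations around `PUSH[1] p`. -/
def powNest (rgt p : Reg) : ℕ → Term
  | 0 => .push 1 p
  | n + 1 => .fort rgt (.single (powNest rgt p n))

/-- The term `POW^n`. -/
def POW (rgt p : Reg) (n : ℕ) : Term := .normal [rgt] (powNest rgt p n)

/-- The term `REMOVE-BLANKS` for tape alphabet codes `{0,…,n−1}` and
input alphabet codes `{0,…,m−1}`. -/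
def REMOVEBLANKS (rgt g1 : Reg) (n m : ℕ) : Term :=
  .seq (.normal [rgt] (.roft rgt (mkBodies (fun i => .push i g1) (n - 1))))
       (.normal [g1]
         (.seq (.fort g1 (mkBodies (fun i => .pop i rgt) (n - 1)))
               (.roft g1 (mkBodies (fun i => if i < m then .push i rgt else .skip) m))))

mutual
  /-- Big-step semantics instrumented with the number of rule applications
  in the derivation. -/
  inductive EvalN : ℕ → Term → FState → FState → Prop where
    | skip : ∀ ω, EvalN 1 .skip ω ω
    | seq : ∀ {k l : ℕ} {t u : Term} {ω ω' ω'' : FState},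
        EvalN k t ω ω' → EvalN l u ω' ω'' → EvalN (k + l + 1) (.seq t u) ω ω''
    | push : ∀ (n : ℕ) (x : Reg) (φ : Store) (c : ℕ),
        EvalN 1 (.push n x) (φ, c) (upd φ x (pushOp n (φ x, c)).1, (pushOp n (φ x, c)).2)
    | pop : ∀ (n : ℕ) (x : Reg) (φ : Store) (c : ℕ),
        EvalN 1 (.pop n x) (φ, c) (upd φ x (popOp n (φ x, c)).1, (popOp n (φ x, c)).2)
    | ifeq_true : ∀ {k x n t} {φ : Store} {c : ℕ} {ω' : FState},
        (φ x).head? = some n → EvalN k t (φ, c) ω' → EvalN (k + 1) (.ifeq x n t) (φ, c) ω'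
    | ifeq_false : ∀ {x n t} (φ : Store) (c : ℕ),
        (φ x).head? ≠ some n → EvalN 1 (.ifeq x n t) (φ, c) (φ, c)
    | normal : ∀ {k xs t ω ω'}, EvalN k t ω ω' → EvalN (k + 1) (.normal xs t) ω ω'
    | fort : ∀ {k x ps ω ω'}, EvalListN k (ω.1 x) ps ω ω' → EvalN (k + 1) (.fort x ps) ω ω'
    | roft : ∀ {k x ps ω ω'}, EvalListN k (ω.1 x).reverse ps ω ω' → EvalN (k + 1) (.roft x ps) ω ω'
  inductive EvalListN : ℕ → Stack → Bodies → FState → FState → Prop where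
    | nil : ∀ (ps : Bodies) (ω : FState), EvalListN 1 [] ps ω ω
    | cons : ∀ {k l : ℕ} {i : ℕ} {t : Stack} {ps : Bodies} {ω ω'' ω' : FState},
        EvalN k (ps.get i) ω ω'' → EvalListN l t ps ω'' ω' →
        EvalListN (k + l + 1) (i :: t) ps ω ω'
end

/-! ### Turing machines -/

/-- Deterministic one-tape Turing machines with a semi-infinite tape, input/output
alphabet `S` embedded in the tape alphabet `Γ`, and direction `Bool`
(`false` = left, `true` = right). -/
structure TM (S : Type) where
  Q : Type
  finQ : Fintype Q
  q0 : Q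
  qhalt : Q
  Γ : Type
  finΓ : Fintype Γ
  decΓ : DecidableEq Γ
  blank : Γ
  embed : S → Γ
  embed_inj : Function.Injective embed
  blank_notin : ∀ a, embed a ≠ blank
  δ : Q → Γ → Q × Γ × Bool

namespace TM

variable {S : Type}

/-- Configurations `(u, q, v)`: left tape part (nearest cell first), current state,
right tape part starting with the scanned cell (no trailing blanks). -/
abbrev Config (M : TM S) : Type := List M.Γ × M.Q × List M.Γ

/-- Remove the trailing blanks of a list. -/
def trim (M : TM S) (l : List M.Γ) : List M.Γ :=
  letI := M.decΓ
  (l.reverse.dropWhile (fun a => decide (a = M.blank))).reverse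

/-- The single-step transition function. -/
def stepFn (M : TM S) (c : M.Config) : M.Config :=
  let u := c.1
  let q := c.2.1
  let v := c.2.2
  let a := v.headD M.blank
  let r := M.δ q a
  if r.2.2 then (r.2.1 :: u, r.1, v.tail)
  else (u.tail, r.1, M.trim (u.headD M.blank :: r.2.1 :: v.tail))

/-- Single-step transition relation `c ⇝ c'`. -/
def Step (M : TM S) (c c' : M.Config) : Prop := c.2.1 ≠ M.qhalt ∧ c' = M.stepFn c

/-- `n`-step transition relation `c ⇝ⁿ c'`. -/
def Steps (M : TM S) : ℕ → M.Config → M.Config → Prop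
  | 0 => fun c c' => c = c'
  | n + 1 => fun c c'' => ∃ c', M.Step c c' ∧ M.Steps n c' c''

/-- The initial configuration on input `w`. -/
def init (M : TM S) (w : List S) : M.Config := ([], M.q0, w.map M.embed)

/-- `M` is a polynomial-time Turing machine. -/
def PTime (M : TM S) : Prop :=
  ∃ a b : ℕ, 0 < a ∧ 0 < b ∧ ∀ w : List S,
    ∃ k ≤ a * w.length ^ b, ∃ c : M.Config, M.Steps k (M.init w) c ∧ c.2.1 = M.qhalt

end TM

/-- `f` is computable in polynomial time. -/
def FPTime {S : Type} (f : List S → List S) : Prop :=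
  ∃ M : TM S, M.PTime ∧
    ∀ w : List S, ∃ k : ℕ, M.Steps k (M.init w) ([], M.qhalt, (f w).map M.embed)

/-- `f` is honest: the input length is polynomially bounded in the output length. -/
def Honest {S : Type} (f : List S → List S) : Prop :=
  ∃ q : Polynomial ℕ, ∀ x : List S, x.length ≤ q.eval (f x).length

/-! ### Encodings and computed functions -/

/-- An encoding of a finite alphabet `S`: a bijection onto `{0, …, |S| − 1}`. -/
structure Encoding (S : Type) [Fintype S] where
  enc : S → ℕ
  inj : Function.Injective enc
  lt : ∀ a, enc a < Fintype.card S

/-- Encoding of strings as stacks. -/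
def Encoding.encStr {S : Type} [Fintype S] (e : Encoding S) (w : List S) : Stack :=
  w.map e.enc

/-- `T` (with input register `rin` and output register `rout`) computes `f`. -/
def Computes {S : Type} [Fintype S] (e : Encoding S) (T : Term) (rin rout : Reg)
    (f : List S → List S) : Prop :=
  ∀ x : List S, ∃ φ : Store,
    Eval T (upd emptyStore rin (e.encStr x), 0) (φ, 0) ∧ φ rout = e.encStr (f x)

/-- `T` computes `f` with zero-garbage. -/
def ComputesZG {S : Type} [Fintype S] (e : Encoding S) (T : Term) (rin rout : Reg)
    (f : List S → List S) : Prop :=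
  ∀ x : List S, ∃ φ : Store,
    Eval T (upd emptyStore rin (e.encStr x), 0) (φ, 0) ∧ φ rout = e.encStr (f x) ∧
    ∀ y : Reg, y ≠ rout → φ y = []

/-! ### Simulation of Turing machines -/

/-- The register holding the left part of the tape. -/
def lftR : Reg := 0
/-- The register holding the current state. -/
def qR : Reg := 1
/-- The register holding the right part of the tape. -/
def rgtR : Reg := 2

/-- `σ` simulates configuration `c` (written `σ ≈ c`). -/
def Sim {S : Type} (M : TM S) (encΓ : M.Γ → ℕ) (encQ : M.Q → ℕ)
    (σ : FState) (c : M.Config) : Prop :=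
  σ.2 = 0 ∧
  σ.1 lftR = c.1.map encΓ ∧
  (σ.1 qR).head? = some (encQ c.2.1) ∧
  ∃ bs : Stack, (∀ b ∈ bs, b = encΓ M.blank) ∧ σ.1 rgtR = c.2.2.map encΓ ++ bs

/-- `σ` cleanly simulates configuration `c` (written `σ ≅ c`). -/
def SimClean {S : Type} (M : TM S) (encΓ : M.Γ → ℕ) (encQ : M.Q → ℕ)
    (σ : FState) (c : M.Config) : Prop :=
  σ.2 = 0 ∧
  σ.1 lftR = c.1.map encΓ ∧
  (σ.1 qR).head? = some (encQ c.2.1) ∧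
  σ.1 rgtR = c.2.2.map encΓ

/-- The hypotheses of the simulation setup: `encΓ` is a bijection of `Γ` onto
`{0,…,n−1}` giving non-input characters larger codes than input characters,
and `encQ` is an injective encoding of states. -/
def SimSetup {S : Type} (M : TM S) (encΓ : M.Γ → ℕ) (encQ : M.Q → ℕ) : Prop :=
  Function.Injective encΓ ∧
  (∀ a : M.Γ, encΓ a < @Fintype.card M.Γ M.finΓ) ∧
  (∀ a : M.Γ, (∀ s : S, M.embed s ≠ a) → ∀ s : S, encΓ (M.embed s) < encΓ a) ∧
  Function.Injective encQ

/-!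
`SIMULATE` is loop-free: a sequence of guarded pushes and pops. Since the body of
`IF x = n` may not write `x`, no guarded term can both read the scanned symbol and consume
it. So `SIMULATE` first pads an empty right tape with a blank (harmless, as `≈` allows
trailing blanks) and copies the current state and the scanned symbol into scratch registers,
shifted by one so that `0` marks a missing value. It then dispatches on the two copies: for
the pair `(q, a)` on the tape exactly one guarded body fires (none if `q` is halting), and it
performs `δ q a` on `lft`, `q` and `rgt`; a left move transfers the top of `lft`, or a blank
if `lft` is empty, onto `rgt`. Every push and pop runs with error counter `0` on the expected
stack top, so the state stays sound. The registers a term may write are read off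
syntactically (`Term.Writes`); this both certifies membership in ForNo and shows that the
guards and copies stay intact while a body runs.
-/

@[simp] theorem upd_apply_self (φ : Store) (x : Reg) (s : Stack) : upd φ x s x = s := if_pos rfl

theorem upd_apply_of_ne {φ : Store} {x y : Reg} (s : Stack) (h : y ≠ x) : upd φ x s y = φ y :=
  if_neg h

@[simp] theorem upd_upd_self (φ : Store) (x : Reg) (s s' : Stack) :
    upd (upd φ x s) x s' = upd φ x s' := by
  funext y; unfold upd; split_ifs <;> rfl

theorem Eval.push_of_sound (n : ℕ) (x : Reg) (φ : Store) :
    Eval (.push n x) (φ, 0) (upd φ x (n :: φ x), 0) :=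
  Eval.push n x φ 0

theorem Eval.pop_of_sound {n : ℕ} {x : Reg} {φ : Store} {s : Stack} (h : φ x = n :: s) :
    Eval (.pop n x) (φ, 0) (upd φ x s, 0) := by
  simpa [popOp, h] using Eval.pop n x φ 0

theorem Bodies.writes_of_writes_get : ∀ {ps : Bodies} {i : ℕ} {z : Reg},
    (ps.get i).Writes z → ps.Writes z
  | .single _, _, _, h => h
  | .cons _ _, 0, _, h => Or.inl h
  | .cons _ ps, _ + 1, _, h => Or.inr (ps.writes_of_writes_get h)

mutual
theorem Eval.eq_of_not_writes {t : Term} {ω ω' : FState} {z : Reg} :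
    Eval t ω ω' → ¬ t.Writes z → ω'.1 z = ω.1 z
  | .skip _, _ => rfl
  | .seq h₁ h₂, hw => by
      simp only [Term.Writes, not_or] at hw
      rw [h₂.eq_of_not_writes hw.2, h₁.eq_of_not_writes hw.1]
  | .push _ x _ _, hw => if_neg fun h => hw h.symm
  | .pop _ x _ _, hw => if_neg fun h => hw h.symm
  | .ifeq_true _ h, hw => h.eq_of_not_writes hw
  | .ifeq_false _ _ _, _ => rfl
  | .normal h, hw => h.eq_of_not_writes hw
  | .fort h, hw => h.eq_of_not_writes hw
  | .roft h, hw => h.eq_of_not_writes hw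

theorem EvalList.eq_of_not_writes {s : Stack} {ps : Bodies} {ω ω' : FState} {z : Reg} :
    EvalList s ps ω ω' → ¬ ps.Writes z → ω'.1 z = ω.1 z
  | .nil _ _, _ => rfl
  | .cons h₁ h₂, hw => by
      rw [h₂.eq_of_not_writes hw, h₁.eq_of_not_writes (hw ∘ Bodies.writes_of_writes_get)]
end

theorem InForNo.push (n : ℕ) (x : Reg) : InForNo (.push n x) := ⟨trivial, trivial⟩

theorem InForNo.pop (n : ℕ) (x : Reg) : InForNo (.pop n x) := ⟨trivial, trivial⟩

theorem InForNo.seq {t u : Term} (ht : InForNo t) (hu : InForNo u) : InForNo (.seq t u) :=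
  ⟨⟨ht.1, hu.1⟩, ht.2, hu.2⟩

theorem InForNo.ifeq {t : Term} {x : Reg} (n : ℕ) (ht : InForNo t) (hx : ¬ t.Writes x) :
    InForNo (.ifeq x n t) :=
  ⟨ht.1, ht.2, hx⟩

section Switch

variable {α : Type*} (x : Reg) (key : α → ℕ) (body : α → Term)

def switch : List α → Term
  | [] => .skip
  | a :: L => .seq (.ifeq x (key a) (body a)) (switch L)

variable {x key body}

@[simp] theorem writes_switch {z : Reg} :
    ∀ {L : List α}, (switch x key body L).Writes z ↔ ∃ a ∈ L, (body a).Writes z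
  | [] => by simp [switch, Term.Writes]
  | a :: L => by simp [switch, Term.Writes, writes_switch]

theorem InForNo.switch {L : List α} (h : ∀ a ∈ L, InForNo (body a) ∧ ¬ (body a).Writes x) :
    InForNo (switch x key body L) := by
  induction L with
  | nil => exact ⟨trivial, trivial⟩
  | cons a L ih =>
    obtain ⟨ha, hw⟩ := h a List.mem_cons_self
    exact (ha.ifeq _ hw).seq (ih fun b hb => h b (List.mem_cons_of_mem _ hb))

theorem eval_switch_of_forall_ne {L : List α} {φ : Store} {c : ℕ}
    (h : ∀ a ∈ L, (φ x).head? ≠ some (key a)) :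
    Eval (switch x key body L) (φ, c) (φ, c) := by
  induction L with
  | nil => exact .skip _
  | cons a L ih =>
    exact .seq (.ifeq_false φ c (h a List.mem_cons_self))
      (ih fun b hb => h b (List.mem_cons_of_mem _ hb))

theorem eval_switch_of_head_eq (hkey : Function.Injective key) {L : List α} (hL : L.Nodup)
    {a : α} (ha : a ∈ L) {φ φ' : Store} {c c' : ℕ} (hx : (φ x).head? = some (key a))
    (hbody : Eval (body a) (φ, c) (φ', c')) (hw : ¬ (body a).Writes x) :
    Eval (switch x key body L) (φ, c) (φ', c') := by
  induction L with
  | nil => cases ha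
  | cons b L ih =>
    obtain ⟨hbL, hL⟩ := List.nodup_cons.1 hL
    rcases List.mem_cons.1 ha with rfl | ha
    · refine .seq (.ifeq_true hx hbody) (eval_switch_of_forall_ne fun a' ha' => ?_)
      rw [show φ' x = φ x from hbody.eq_of_not_writes hw, hx, Ne, Option.some_inj, hkey.eq_iff]
      exact fun h => hbL (h ▸ ha')
    · refine .seq (.ifeq_false φ c ?_) (ih hL ha)
      rw [hx, Ne, Option.some_inj, hkey.eq_iff]
      exact fun h => hbL (h ▸ ha)

end Switch

section StackMoves

variable {α : Type*} (x y : Reg) (key : α → ℕ) (L : List α)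

def peek : Term :=
  .seq (.push 0 y) (switch x key (fun a => .push (key a + 1) y) L)

def fillEmpty (b : α) : Term :=
  .seq (peek x y key L) (.ifeq y 0 (.push (key b) x))

def transfer (z : Reg) : Term :=
  .seq (peek x y key L)
    (switch y (fun a => key a + 1) (fun a => .seq (.pop (key a) x) (.push (key a) z)) L)

def moveHead (z : Reg) (b : α) : Term :=
  .seq (fillEmpty x y key L b) (transfer x y key L z)

variable {x y key L}

theorem InForNo.peek (hxy : x ≠ y) : InForNo (peek x y key L) :=
  (InForNo.push _ _).seq (.switch fun _ _ => ⟨.push _ _, hxy.symm⟩)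

theorem InForNo.fillEmpty (hxy : x ≠ y) (b : α) : InForNo (fillEmpty x y key L b) :=
  (InForNo.peek hxy).seq ((InForNo.push _ _).ifeq _ hxy)

theorem InForNo.transfer {z : Reg} (hxy : x ≠ y) (hzy : z ≠ y) :
    InForNo (transfer x y key L z) :=
  (InForNo.peek hxy).seq
    (.switch fun _ _ => ⟨(InForNo.pop _ _).seq (.push _ _), by simp [Term.Writes, hxy, hzy]⟩)

theorem InForNo.moveHead {z : Reg} (hxy : x ≠ y) (hzy : z ≠ y) (b : α) :
    InForNo (moveHead x y key L z b) :=
  (InForNo.fillEmpty hxy b).seq (.transfer hxy hzy)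

theorem not_writes_fillEmpty {b : α} {w : Reg} (hwx : w ≠ x) (hwy : w ≠ y) :
    ¬ (fillEmpty x y key L b).Writes w := by
  simp [fillEmpty, peek, Term.Writes, hwx.symm, hwy.symm]

theorem not_writes_moveHead {z : Reg} {b : α} {w : Reg} (hwx : w ≠ x) (hwy : w ≠ y)
    (hwz : w ≠ z) : ¬ (moveHead x y key L z b).Writes w := by
  simp [moveHead, fillEmpty, transfer, peek, Term.Writes, hwx.symm, hwy.symm, hwz.symm]

theorem eval_peek_of_forall_ne (hxy : x ≠ y) {φ : Store}
    (h : ∀ a ∈ L, (φ x).head? ≠ some (key a)) :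
    Eval (peek x y key L) (φ, 0) (upd φ y (0 :: φ y), 0) :=
  (Eval.push_of_sound 0 y φ).seq (eval_switch_of_forall_ne (by rwa [upd, if_neg hxy]))

theorem eval_peek_of_head_eq (hxy : x ≠ y) (hkey : Function.Injective key) (hL : L.Nodup)
    {a : α} (ha : a ∈ L) {φ : Store} (hx : (φ x).head? = some (key a)) :
    Eval (peek x y key L) (φ, 0) (upd φ y ((key a + 1) :: 0 :: φ y), 0) := by
  have := (Eval.push_of_sound 0 y φ).seq
    (eval_switch_of_head_eq (body := fun a => .push (key a + 1) y) hkey hL ha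
      (by rwa [upd, if_neg hxy]) (Eval.push_of_sound _ _ _) hxy.symm)
  rwa [upd_apply_self, upd_upd_self] at this

theorem eval_fillEmpty (hxy : x ≠ y) (hkey : Function.Injective key) (hL : L.Nodup)
    (hLc : ∀ a, a ∈ L) (b : α) {φ : Store}
    (hx : ∀ n ∈ (φ x).head?, n ∈ Set.range key) :
    ∃ ψ, Eval (fillEmpty x y key L b) (φ, 0) (ψ, 0) ∧
      ψ x = (φ x).headD (key b) :: (φ x).tail := by
  cases h : φ x with
  | nil =>
    exact ⟨_, (eval_peek_of_forall_ne hxy (by simp [h])).seq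
      (.ifeq_true (by simp) (Eval.push_of_sound _ _ _)), by simp [upd, hxy, h]⟩
  | cons n s =>
    obtain ⟨a, rfl⟩ := hx n (by simp [h])
    exact ⟨_, (eval_peek_of_head_eq hxy hkey hL (hLc a) (by simp [h])).seq
      (.ifeq_false _ _ (by simp)), by simp [upd, hxy, h]⟩

theorem eval_transfer {z : Reg} (hxy : x ≠ y) (hzy : z ≠ y) (hxz : x ≠ z)
    (hkey : Function.Injective key) (hL : L.Nodup) {a : α} (ha : a ∈ L) {φ : Store} {s : Stack}
    (hx : φ x = key a :: s) :
    ∃ ψ, Eval (transfer x y key L z) (φ, 0) (ψ, 0) ∧ ψ x = s ∧ ψ z = key a :: φ z := by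
  have hpeek := eval_peek_of_head_eq hxy hkey hL ha (φ := φ) (by simp [hx])
  have hbody := (Eval.pop_of_sound (n := key a) (x := x) (φ := upd φ y ((key a + 1) :: 0 :: φ y))
    (s := s) (by simp [upd, hxy, hx])).seq (Eval.push_of_sound (key a) z _)
  refine ⟨_, hpeek.seq (eval_switch_of_head_eq ((add_left_injective 1).comp hkey) hL ha
      (by simp) hbody (by simp [Term.Writes, hxy, hzy])), ?_, ?_⟩
  · simp [upd, hxz]
  · simp [upd, hxz.symm, hzy]

theorem eval_moveHead {z : Reg} (hxy : x ≠ y) (hzy : z ≠ y) (hxz : x ≠ z)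
    (hkey : Function.Injective key) (hL : L.Nodup) (hLc : ∀ a, a ∈ L) (b : α) {φ : Store}
    (hx : ∀ n ∈ (φ x).head?, n ∈ Set.range key) :
    ∃ ψ, Eval (moveHead x y key L z b) (φ, 0) (ψ, 0) ∧
      ψ x = (φ x).tail ∧ ψ z = (φ x).headD (key b) :: φ z := by
  obtain ⟨φ₁, hfill, h₁⟩ := eval_fillEmpty hxy hkey hL hLc b hx
  obtain ⟨a, ha⟩ : ∃ a, (φ x).headD (key b) = key a := by
    cases h : φ x with
    | nil => exact ⟨b, rfl⟩
    | cons n s =>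
      obtain ⟨a, rfl⟩ := hx n (by simp [h])
      exact ⟨a, rfl⟩
  rw [ha] at h₁
  obtain ⟨ψ, htransfer, hψx, hψz⟩ := eval_transfer hxy hzy hxz hkey hL (hLc a) h₁
  have hz : φ₁ z = φ z := hfill.eq_of_not_writes (not_writes_fillEmpty hxz.symm hzy)
  exact ⟨ψ, hfill.seq htransfer, hψx, by rw [hψz, hz, ha]⟩

end StackMoves

def BlankPadded {Γ : Type*} (e : Γ → ℕ) (b : Γ) (v : List Γ) (s : Stack) : Prop :=
  ∃ bs : Stack, (∀ n ∈ bs, n = e b) ∧ s = v.map e ++ bs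

namespace BlankPadded

variable {Γ : Type*} {e : Γ → ℕ} {b : Γ} {v : List Γ} {s : Stack}

theorem mem_range (h : BlankPadded e b v s) : ∀ n ∈ s, n ∈ Set.range e := by
  obtain ⟨bs, hbs, rfl⟩ := h
  intro n hn
  rcases List.mem_append.1 hn with hn | hn
  · obtain ⟨a, -, rfl⟩ := List.mem_map.1 hn
    exact ⟨a, rfl⟩
  · exact ⟨b, (hbs n hn).symm⟩

theorem headD_eq (h : BlankPadded e b v s) : s.headD (e b) = e (v.headD b) := by
  obtain ⟨bs, hbs, rfl⟩ := h
  cases v with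
  | cons a v => rfl
  | nil =>
    cases bs with
    | nil => rfl
    | cons n bs => exact hbs n List.mem_cons_self

theorem tail (h : BlankPadded e b v s) : BlankPadded e b v.tail s.tail := by
  obtain ⟨bs, hbs, rfl⟩ := h
  cases v with
  | cons a v => exact ⟨bs, hbs, rfl⟩
  | nil => exact ⟨bs.tail, fun n hn => hbs n (List.mem_of_mem_tail hn), rfl⟩

theorem cons (h : BlankPadded e b v s) (a : Γ) : BlankPadded e b (a :: v) (e a :: s) := by
  obtain ⟨bs, hbs, rfl⟩ := h
  exact ⟨bs, hbs, rfl⟩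

theorem cons_headD_tail (h : BlankPadded e b v s) :
    BlankPadded e b v (e (v.headD b) :: s.tail) := by
  obtain ⟨bs, hbs, rfl⟩ := h
  cases v with
  | cons a v => exact ⟨bs, hbs, rfl⟩
  | nil =>
    refine ⟨e b :: bs.tail, fun n hn => ?_, rfl⟩
    rcases List.mem_cons.1 hn with rfl | hn
    · rfl
    · exact hbs n (List.mem_of_mem_tail hn)

end BlankPadded

theorem TM.blankPadded_trim {S : Type} (M : TM S) {e : M.Γ → ℕ} {l : List M.Γ} {s : Stack}
    (h : BlankPadded e M.blank l s) : BlankPadded e M.blank (M.trim l) s := by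
  let _ := M.decΓ
  obtain ⟨bs, hbs, rfl⟩ := h
  have hsplit := List.rdropWhile_append_rtakeWhile (p := fun a => decide (a = M.blank)) (l := l)
  refine ⟨(l.rtakeWhile fun a => decide (a = M.blank)).map e ++ bs, ?_, ?_⟩
  · intro n hn
    rcases List.mem_append.1 hn with hn | hn
    · obtain ⟨a, ha, rfl⟩ := List.mem_map.1 hn
      rw [show a = M.blank by simpa using List.mem_rtakeWhile_imp ha]
    · exact hbs n hn
  · conv_lhs => rw [← hsplit]
    simp [TM.trim, List.rdropWhile]

theorem sim_iff {S : Type} {M : TM S} {encΓ : M.Γ → ℕ} {encQ : M.Q → ℕ} {σ : FState}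
    {c : M.Config} :
    Sim M encΓ encQ σ c ↔ σ.2 = 0 ∧ σ.1 lftR = c.1.map encΓ ∧
      (σ.1 qR).head? = some (encQ c.2.1) ∧ BlankPadded encΓ M.blank c.2.2 (σ.1 rgtR) :=
  Iff.rfl

def auxR : Reg := 3
def qCopyR : Reg := 4
def symCopyR : Reg := 5

namespace TM

variable {S : Type} (M : TM S)

noncomputable def symbols : List M.Γ := (@Finset.univ M.Γ M.finΓ).toList

noncomputable def states : List M.Q := (@Finset.univ M.Q M.finQ).toList

open Classical in
noncomputable def activeStates : List M.Q := ((@Finset.univ M.Q M.finQ).erase M.qhalt).toList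

theorem nodup_symbols : M.symbols.Nodup := Finset.nodup_toList _

theorem mem_symbols (a : M.Γ) : a ∈ M.symbols :=
  Finset.mem_toList.2 (@Finset.mem_univ _ M.finΓ a)

theorem nodup_states : M.states.Nodup := Finset.nodup_toList _

theorem mem_states (q : M.Q) : q ∈ M.states :=
  Finset.mem_toList.2 (@Finset.mem_univ _ M.finQ q)

theorem nodup_activeStates : M.activeStates.Nodup := Finset.nodup_toList _

theorem mem_activeStates {q : M.Q} : q ∈ M.activeStates ↔ q ≠ M.qhalt := by
  classical
  simp [activeStates]

end TM

section Simulation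

variable {S : Type} (M : TM S) (encΓ : M.Γ → ℕ) (encQ : M.Q → ℕ)

noncomputable def transition (q : M.Q) (a : M.Γ) : Term :=
  .seq (.pop (encΓ a) rgtR) <| .seq (.push (encQ (M.δ q a).1) qR) <|
    if (M.δ q a).2.2 then .push (encΓ (M.δ q a).2.1) lftR
    else .seq (.push (encΓ (M.δ q a).2.1) rgtR) (moveHead lftR auxR encΓ M.symbols rgtR M.blank)

noncomputable def readPhase : Term :=
  .seq (fillEmpty rgtR auxR encΓ M.symbols M.blank) <|
    .seq (peek qR qCopyR encQ M.states) (peek rgtR symCopyR encΓ M.symbols)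

noncomputable def dispatch : Term :=
  switch qCopyR (fun q => encQ q + 1)
    (fun q => switch symCopyR (fun a => encΓ a + 1) (transition M encΓ encQ q) M.symbols)
    M.activeStates

noncomputable def simulate : Term := .seq (readPhase M encΓ encQ) (dispatch M encΓ encQ)

variable {M encΓ encQ}

theorem not_writes_transition {q : M.Q} {a : M.Γ} {z : Reg} (hz : auxR < z) :
    ¬ (transition M encΓ encQ q a).Writes z := by
  unfold transition
  split <;>
    simp [Term.Writes, moveHead, fillEmpty, transfer, peek, lftR, qR, rgtR, auxR] at hz ⊢ <;>
    grind

variable (M encΓ encQ)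

theorem InForNo.transition (q : M.Q) (a : M.Γ) : InForNo (transition M encΓ encQ q a) := by
  refine (InForNo.pop _ _).seq ((InForNo.push _ _).seq ?_)
  split
  · exact .push _ _
  · exact (InForNo.push _ _).seq (.moveHead (by decide) (by decide) _)

theorem inForNo_simulate : InForNo (simulate M encΓ encQ) := by
  refine .seq ((InForNo.fillEmpty (by decide) _).seq ((InForNo.peek (by decide)).seq
    (.peek (by decide))))
    (.switch fun q _ => ⟨.switch fun a _ => ⟨.transition _ _ _ q a, ?_⟩, ?_⟩)
  · exact not_writes_transition (by decide)
  · simp only [writes_switch, not_exists, not_and]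
    exact fun a _ => not_writes_transition (by decide)

variable {M encΓ encQ}

theorem eval_readPhase (hΓ : Function.Injective encΓ) (hQ : Function.Injective encQ)
    {φ : Store} {u v : List M.Γ} {q : M.Q} (h : Sim M encΓ encQ (φ, 0) (u, q, v)) :
    ∃ ψ, Eval (readPhase M encΓ encQ) (φ, 0) (ψ, 0) ∧
      ψ lftR = u.map encΓ ∧ (ψ qR).head? = some (encQ q) ∧
      ψ rgtR = encΓ (v.headD M.blank) :: (φ rgtR).tail ∧
      (ψ qCopyR).head? = some (encQ q + 1) ∧
      (ψ symCopyR).head? = some (encΓ (v.headD M.blank) + 1) := by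
  obtain ⟨-, hl, hq, hpad⟩ : _ ∧ φ lftR = u.map encΓ ∧ (φ qR).head? = some (encQ q) ∧
    BlankPadded encΓ M.blank v (φ rgtR) := h
  obtain ⟨φ₁, hfill, h₁⟩ := eval_fillEmpty (x := rgtR) (y := auxR) (by decide) hΓ
    M.nodup_symbols M.mem_symbols M.blank fun n hn => hpad.mem_range n (List.mem_of_mem_head? hn)
  rw [hpad.headD_eq] at h₁
  have hl₁ : φ₁ lftR = φ lftR :=
    hfill.eq_of_not_writes (not_writes_fillEmpty (by decide) (by decide))
  have hq₁ : φ₁ qR = φ qR :=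
    hfill.eq_of_not_writes (not_writes_fillEmpty (by decide) (by decide))
  have hpeekQ := eval_peek_of_head_eq (x := qR) (y := qCopyR) (by decide) hQ M.nodup_states
    (M.mem_states q) (φ := φ₁) (by rw [hq₁]; exact hq)
  have hpeekΓ := eval_peek_of_head_eq (x := rgtR) (y := symCopyR) (by decide) hΓ
    M.nodup_symbols (M.mem_symbols (v.headD M.blank))
    (φ := upd φ₁ qCopyR ((encQ q + 1) :: 0 :: φ₁ qCopyR))
    (by rw [upd_apply_of_ne _ (by decide), h₁]; rfl)
  refine ⟨_, hfill.seq (hpeekQ.seq hpeekΓ), ?_, ?_, ?_, ?_, ?_⟩ <;>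
    simp (disch := decide) [upd_apply_of_ne, hl₁, hl, hq₁, hq, h₁]

theorem eval_dispatch_of_halt {ψ : Store} (hQ : Function.Injective encQ)
    (hψ : (ψ qCopyR).head? = some (encQ M.qhalt + 1)) :
    Eval (dispatch M encΓ encQ) (ψ, 0) (ψ, 0) := by
  refine eval_switch_of_forall_ne fun q hq => ?_
  rw [hψ, Ne, Option.some_inj, add_left_inj, hQ.eq_iff]
  exact (M.mem_activeStates.1 hq).symm

theorem eval_dispatch_of_ne_halt (hΓ : Function.Injective encΓ) (hQ : Function.Injective encQ)
    {q : M.Q} (hq : q ≠ M.qhalt) {a : M.Γ} {ψ ψ' : Store}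
    (hqCopy : (ψ qCopyR).head? = some (encQ q + 1))
    (hsymCopy : (ψ symCopyR).head? = some (encΓ a + 1))
    (h : Eval (transition M encΓ encQ q a) (ψ, 0) (ψ', 0)) :
    Eval (dispatch M encΓ encQ) (ψ, 0) (ψ', 0) := by
  refine eval_switch_of_head_eq ((add_left_injective 1).comp hQ) M.nodup_activeStates
    (M.mem_activeStates.2 hq) hqCopy ?_ ?_
  · exact eval_switch_of_head_eq ((add_left_injective 1).comp hΓ) M.nodup_symbols
      (M.mem_symbols a) hsymCopy h (not_writes_transition (by decide))
  · simp only [writes_switch, not_exists, not_and]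
    exact fun a _ => not_writes_transition (by decide)

theorem eval_transition (hΓ : Function.Injective encΓ) (q : M.Q) {u v : List M.Γ} {ψ : Store}
    {r : Stack} (hl : ψ lftR = u.map encΓ) (hr : ψ rgtR = encΓ (v.headD M.blank) :: r)
    (hpad : BlankPadded encΓ M.blank v.tail r) :
    ∃ ψ', Eval (transition M encΓ encQ q (v.headD M.blank)) (ψ, 0) (ψ', 0) ∧
      Sim M encΓ encQ (ψ', 0) (M.stepFn (u, q, v)) := by
  have hstep : M.stepFn (u, q, v) = let (q', b, d) := M.δ q (v.headD M.blank)
      if d then (b :: u, q', v.tail) else (u.tail, q', M.trim (u.headD M.blank :: b :: v.tail)) :=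
    rfl
  rcases hδ : M.δ q (v.headD M.blank) with ⟨q', b, d⟩
  have hpop := Eval.pop_of_sound hr
  obtain ⟨ψ₁, hpushQ, hl₁, hq₁, hr₁⟩ : ∃ ψ₁,
      Eval (.push (encQ q') qR) (upd ψ rgtR r, 0) (ψ₁, 0) ∧
      ψ₁ lftR = u.map encΓ ∧ ψ₁ qR = encQ q' :: ψ qR ∧ ψ₁ rgtR = r :=
    ⟨_, Eval.push_of_sound _ _ _, by simp (disch := decide) [upd_apply_of_ne, hl],
      by simp (disch := decide) [upd_apply_of_ne], by simp (disch := decide) [upd_apply_of_ne]⟩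
  cases d <;> simp only [transition, hδ, hstep, Bool.false_eq_true, ↓reduceIte]
  · have hpushB := Eval.push_of_sound (encΓ b) rgtR ψ₁
    obtain ⟨ψ', hmove, hl', hr'⟩ := eval_moveHead (x := lftR) (y := auxR) (z := rgtR)
      (by decide) (by decide) (by decide) hΓ M.nodup_symbols M.mem_symbols M.blank
      (φ := upd ψ₁ rgtR (encΓ b :: ψ₁ rgtR))
      (by simp (disch := decide) [upd_apply_of_ne, hl₁])
    have hq' : ψ' qR = ψ₁ qR := by
      have h := hmove.eq_of_not_writes (z := qR)
        (not_writes_moveHead (by decide) (by decide) (by decide))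
      dsimp only at h
      rwa [upd_apply_of_ne _ (by decide)] at h
    refine ⟨ψ', hpop.seq (hpushQ.seq (hpushB.seq hmove)), sim_iff.2 ⟨rfl, ?_, ?_, ?_⟩⟩ <;>
      dsimp only
    · rw [hl', upd_apply_of_ne _ (by decide), hl₁, List.map_tail]
    · rw [hq', hq₁]; rfl
    · rw [hr', upd_apply_of_ne _ (by decide), hl₁, upd_apply_self, hr₁, List.headD_map]
      exact M.blankPadded_trim ((hpad.cons b).cons _)
  · refine ⟨_, hpop.seq (hpushQ.seq (Eval.push_of_sound (encΓ b) lftR ψ₁)),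
      sim_iff.2 ⟨rfl, ?_, ?_, ?_⟩⟩ <;> dsimp only
    · rw [upd_apply_self, hl₁, List.map_cons]
    · rw [upd_apply_of_ne _ (by decide), hq₁]; rfl
    · rw [upd_apply_of_ne _ (by decide), hr₁]
      exact hpad

end Simulation

end ForNo

open ForNo in
/-- Single-step simulation: there is a ForNo term `SIMULATE`
mapping any state simulating `c` to a state simulating `c` (if `c` is halting)
resp. `c'` (if `c ⇝ c'`). -/
theorem simulate_single_step {S : Type} [Fintype S] (M : TM S) (hM : M.PTime)
    (encΓ : M.Γ → ℕ) (encQ : M.Q → ℕ) (hsetup : SimSetup M encΓ encQ) :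
    ∃ SIMULATE : Term, InForNo SIMULATE ∧
      ∀ (σ : FState) (c : M.Config), Sim M encΓ encQ σ c →
        ((c.2.1 = M.qhalt →
            ∃ τ : FState, Eval SIMULATE σ τ ∧ Sim M encΓ encQ τ c) ∧
         (∀ c' : M.Config, M.Step c c' →
            ∃ τ : FState, Eval SIMULATE σ τ ∧ Sim M encΓ encQ τ c')) := by
  obtain ⟨hΓ, -, -, hQ⟩ := hsetup
  refine ⟨simulate M encΓ encQ, inForNo_simulate M encΓ encQ, ?_⟩
  rintro ⟨φ, n⟩ ⟨u, q, v⟩ hsim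
  obtain rfl : n = 0 := hsim.1
  have hpad : BlankPadded encΓ M.blank v (φ rgtR) := hsim.2.2.2
  obtain ⟨ψ, hread, hl, hq, hr, hqCopy, hsymCopy⟩ := eval_readPhase hΓ hQ hsim
  constructor
  · rintro rfl
    exact ⟨(ψ, 0), hread.seq (eval_dispatch_of_halt hQ hqCopy),
      sim_iff.2 ⟨rfl, hl, hq, by dsimp only; rw [hr]; exact hpad.cons_headD_tail⟩⟩
  · rintro c' ⟨hhalt, rfl⟩
    obtain ⟨ψ', htrans, hsim'⟩ := eval_transition (encQ := encQ) hΓ q hl hr hpad.tail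
    exact ⟨(ψ', 0), hread.seq (eval_dispatch_of_ne_halt hΓ hQ hhalt hqCopy hsymCopy htrans),
      hsim'⟩
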